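/- Linear interpolation of Gaussian scores with unequal variances does NOT follow the schedule: let p⁽¹⁾ = N(0, σ̄²) and p⁽²⁾ = N(0, k²σ̄²) with k ≥ 0, k ≠ 1, noised to p_s⁽ⁱ⁾ with variances σ̄² + σ̂(s)² and k²σ̄² + σ̂(s)² respectively. Then for c ∈ R\{0,1}, c∇log p_s⁽¹⁾(x) + (1−c)∇log p_s⁽²⁾(x) = −x/(σ̄² + σ̄²(1−c)(k²−1)β_{c,k}(s) + σ̂(s)²), where β_{c,k}(s) = (σ̄² + σ̂(s)²)/((1 + c(k²−1))σ̄² + σ̂(s)²). In particular, since β_{c,k}(s) depends nontrivially on s, the combined score is not the score of any single fixed initial Gaussian noised under the schedule (σ̂). -/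

import Mathlib

/-- The density of the scalar Gaussian `N(μ, τ²)` (with variance `τ2 = τ²`). -/
noncomputable def gaussDensity (μ τ2 : ℝ) (x : ℝ) : ℝ :=
  (Real.sqrt (2 * Real.pi * τ2))⁻¹ * Real.exp (-(x - μ) ^ 2 / (2 * τ2))

/-!
Both scores are linear, `-x / A` and `-x / B` with `A = σ̄² + t`, `B = k²σ̄² + t`, `t = σ̂²`,
so their combination is `-x / V` with `V = AB / (cB + (1-c)A)`, which is the paper's
denominator. If `V = τ² + t` for two distinct values of `t`, comparing the two affine
identities `(τ² + t)(cB + (1-c)A) = AB` in `t` forces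
`c (1-c) (σ̄² - k²σ̄²)² = 0`, impossible for `c ∉ {0, 1}`, `k ≠ 1`.
-/

theorem hasDerivAt_log_gaussDensity (μ : ℝ) {τ2 : ℝ} (hτ2 : 0 < τ2) (x : ℝ) :
    HasDerivAt (fun y => Real.log (gaussDensity μ τ2 y)) (-(x - μ) / τ2) x := by
  have hlog : (fun y => Real.log (gaussDensity μ τ2 y))
      = fun y => Real.log (Real.sqrt (2 * Real.pi * τ2))⁻¹ + -(y - μ) ^ 2 / (2 * τ2) := by
    funext y
    rw [gaussDensity, Real.log_mul (by positivity) (Real.exp_ne_zero _), Real.log_exp]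
  rw [hlog]
  refine ((((hasDerivAt_id' x).sub_const μ).pow 2).neg.div_const (2 * τ2)).const_add
    (Real.log (Real.sqrt (2 * Real.pi * τ2))⁻¹) |>.congr_deriv ?_
  field_simp
  ring

theorem deriv_log_gaussDensity (μ : ℝ) {τ2 : ℝ} (hτ2 : 0 < τ2) (x : ℝ) :
    deriv (fun y => Real.log (gaussDensity μ τ2 y)) x = -(x - μ) / τ2 :=
  (hasDerivAt_log_gaussDensity μ hτ2 x).deriv

theorem mul_neg_div_add_one_sub_mul_neg_div {A B : ℝ} (hA : A ≠ 0) (hB : B ≠ 0) (c x : ℝ) :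
    c * (-x / A) + (1 - c) * (-x / B) = -x / (A * B / (c * B + (1 - c) * A)) := by
  rw [div_div_eq_mul_div]
  field_simp
  ring

theorem add_mul_beta_add_eq_mul_div {σ2 κ2 c t : ℝ} (hD : (1 + c * (κ2 - 1)) * σ2 + t ≠ 0) :
    σ2 + σ2 * (1 - c) * (κ2 - 1) * ((σ2 + t) / ((1 + c * (κ2 - 1)) * σ2 + t)) + t
      = (σ2 + t) * (κ2 * σ2 + t) / ((1 + c * (κ2 - 1)) * σ2 + t) := by
  rw [eq_div_iff hD, add_mul, add_mul, mul_assoc _ (_ / _), div_mul_cancel₀ _ hD]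
  ring

theorem eq_of_shifted_mul_eq_mul {a b c τ t₁ t₂ : ℝ} (hc0 : c ≠ 0) (hc1 : c ≠ 1) (ht : t₁ ≠ t₂)
    (h₁ : (τ + t₁) * (c * b + (1 - c) * a + t₁) = (a + t₁) * (b + t₁))
    (h₂ : (τ + t₂) * (c * b + (1 - c) * a + t₂) = (a + t₂) * (b + t₂)) :
    a = b := by
  have hτ : τ = c * a + (1 - c) * b := by
    have : (t₁ - t₂) * (τ - (c * a + (1 - c) * b)) = 0 := by linear_combination h₁ - h₂
    linear_combination (mul_eq_zero.1 this).resolve_left (sub_ne_zero.2 ht)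
  have : c * (1 - c) * (a - b) ^ 2 = 0 := by
    subst hτ
    linear_combination h₁
  simpa [hc0, sub_ne_zero.2 (Ne.symm hc1), sub_eq_zero] using this

/-- **linear interpolation of Gaussian scores with unequal variances does
NOT follow the schedule.** Let `p⁽¹⁾ = N(0, σ̄²)` and `p⁽²⁾ = N(0, k² σ̄²)` with
`k ≥ 0`, `k ≠ 1`, noised (at effective noise level `σ̂(s) > 0`) to `p_s⁽ⁱ⁾` with
variances `σ̄² + σ̂(s)²` and `k² σ̄² + σ̂(s)²` respectively.  Then for `c ∉ {0, 1}`,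
`c ∇log p_s⁽¹⁾(x) + (1-c) ∇log p_s⁽²⁾(x)
  = -x / (σ̄² + σ̄² (1-c)(k²-1) β_{c,k}(s) + σ̂(s)²)` with
`β_{c,k}(s) = (σ̄² + σ̂(s)²)/((1 + c(k²-1)) σ̄² + σ̂(s)²)`; and (since `β_{c,k}` depends
nontrivially on `s` when `σ̂` is non-constant) the combined score is not the score of any
single fixed initial Gaussian `N(0, τ²)` noised under the schedule `σ̂`. -/
theorem stmt13 (σb k c : ℝ) (hσb : 0 < σb) (hk : 0 ≤ k) (hk1 : k ≠ 1)
    (hc0 : c ≠ 0) (hc1 : c ≠ 1)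
    (σh : ℝ → ℝ) (hσh : ∀ s, 0 < σh s)
    (hden : ∀ s, (1 + c * (k ^ 2 - 1)) * σb ^ 2 + σh s ^ 2 ≠ 0)
    (hnonconst : ∃ s₁ s₂, σh s₁ ^ 2 ≠ σh s₂ ^ 2) :
    (∀ s x,
      c * deriv (fun y => Real.log (gaussDensity 0 (σb ^ 2 + σh s ^ 2) y)) x +
          (1 - c) *
            deriv (fun y => Real.log (gaussDensity 0 (k ^ 2 * σb ^ 2 + σh s ^ 2) y)) x =
        -x / (σb ^ 2 +
          σb ^ 2 * (1 - c) * (k ^ 2 - 1) *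
            ((σb ^ 2 + σh s ^ 2) / ((1 + c * (k ^ 2 - 1)) * σb ^ 2 + σh s ^ 2)) +
          σh s ^ 2)) ∧
    ¬ ∃ τ2 : ℝ, ∀ s x,
      c * deriv (fun y => Real.log (gaussDensity 0 (σb ^ 2 + σh s ^ 2) y)) x +
          (1 - c) *
            deriv (fun y => Real.log (gaussDensity 0 (k ^ 2 * σb ^ 2 + σh s ^ 2) y)) x =
        -x / (τ2 + σh s ^ 2) := by
  have hmix : ∀ s x,
      c * deriv (fun y => Real.log (gaussDensity 0 (σb ^ 2 + σh s ^ 2) y)) x +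
          (1 - c) *
            deriv (fun y => Real.log (gaussDensity 0 (k ^ 2 * σb ^ 2 + σh s ^ 2) y)) x =
        -x / ((σb ^ 2 + σh s ^ 2) * (k ^ 2 * σb ^ 2 + σh s ^ 2)
          / ((1 + c * (k ^ 2 - 1)) * σb ^ 2 + σh s ^ 2)) := by
    intro s x
    have hA : 0 < σb ^ 2 + σh s ^ 2 := by positivity
    have hB : 0 < k ^ 2 * σb ^ 2 + σh s ^ 2 := by have := hσh s; positivity
    rw [deriv_log_gaussDensity 0 hA, deriv_log_gaussDensity 0 hB, sub_zero,
      mul_neg_div_add_one_sub_mul_neg_div hA.ne' hB.ne']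
    congr 2
    ring
  refine ⟨fun s x => by rw [hmix, add_mul_beta_add_eq_mul_div (hden s)], ?_⟩
  rintro ⟨τ2, H⟩
  have hprod : ∀ s, (τ2 + σh s ^ 2) * ((1 + c * (k ^ 2 - 1)) * σb ^ 2 + σh s ^ 2)
      = (σb ^ 2 + σh s ^ 2) * (k ^ 2 * σb ^ 2 + σh s ^ 2) := by
    intro s
    have h := (hmix s 1).symm.trans (H s 1)
    rw [neg_div, neg_div, neg_inj, one_div, one_div, inv_inj] at h
    exact (eq_div_iff (hden s)).1 h.symm
  obtain ⟨s₁, s₂, hne⟩ := hnonconst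
  have hab : σb ^ 2 = k ^ 2 * σb ^ 2 :=
    eq_of_shifted_mul_eq_mul (τ := τ2) hc0 hc1 hne (by linear_combination hprod s₁)
      (by linear_combination hprod s₂)
  have hk2 : k ^ 2 = 1 :=
    mul_right_cancel₀ (pow_ne_zero 2 hσb.ne') (hab.symm.trans (one_mul _).symm)
  exact hk1 ((pow_eq_one_iff_of_nonneg hk two_ne_zero).1 hk2)
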